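/- For every ν > 0, t > 0 and x, y ∈ ℝ, ∫_0^t ∫_ℝ G_ν(t − s, x − z) G_ν(t − s, y − z) dz ds = (|x−y|/ν)(Φ(|x−y|/√(2νt)) − 1) + 2t · G_{2ν}(t, x − y). -/

import Mathlib

open MeasureTheory Real Set Filter

/-- Standard normal CDF. -/
noncomputable def Phi (x : ℝ) : ℝ := ∫ y in Set.Iic x, Real.exp (-y^2/2) / Real.sqrt (2*Real.pi)

/-- Error function. -/
noncomputable def erf (x : ℝ) : ℝ := (2 / Real.sqrt Real.pi) * ∫ y in (0:ℝ)..x, Real.exp (-y^2)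

/-- Complementary error function. -/
noncomputable def erfc (x : ℝ) : ℝ := 1 - erf x

/-- One-dimensional heat kernel with diffusion parameter ν. -/
noncomputable def G (ν t x : ℝ) : ℝ := (Real.sqrt (2*Real.pi*ν*t))⁻¹ * Real.exp (-x^2/(2*ν*t))

/-- The kernel K(t,x;ν,λ). -/
noncomputable def K (ν lam t x : ℝ) : ℝ :=
  G (ν/2) t x * (lam^2 / Real.sqrt (4*Real.pi*ν*t)
    + lam^4/(2*ν) * Real.exp (lam^4*t/(4*ν)) * Phi (lam^2 * Real.sqrt (t/(2*ν))))

/-- The function H(t;ν,λ). -/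
noncomputable def Hfun (ν lam t : ℝ) : ℝ :=
  2 * Real.exp (lam^4*t/(4*ν)) * Phi (lam^2 * Real.sqrt (t/(2*ν))) - 1

/-! By the semigroup property of the heat kernel, the inner integral equals
`G ν (2 (t - s)) (x - y) = G (2ν) (t - s) (x - y)`, so after `τ = t - s` it remains to
integrate `τ ↦ G c τ a` over `(0, t]` with `c = 2ν`, `a = x - y`. Since
`∂_τ G = G (a² / (2cτ²) - 1 / (2τ))`, the function
`2τ G c τ a + (2|a|/c) Φ(|a| / √(cτ))` is an antiderivative on `(0, ∞)`; it tends to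
`2|a|/c` as `τ → 0⁺`, and the integrand is nonnegative, so the fundamental theorem of
calculus applies up to the singular endpoint. -/

open ProbabilityTheory Topology

lemma gaussianPDFReal_zero_one (y : ℝ) :
    gaussianPDFReal 0 1 y = Real.exp (-y^2/2) / Real.sqrt (2*Real.pi) := by
  simp [gaussianPDFReal, div_eq_inv_mul]

lemma Phi_eq_integral_gaussianPDFReal (x : ℝ) :
    Phi x = ∫ y in Iic x, gaussianPDFReal 0 1 y := by
  simp only [Phi, gaussianPDFReal_zero_one]

lemma Phi_eq_cdf (x : ℝ) : Phi x = cdf (gaussianReal 0 1) x := by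
  rw [cdf_eq_real, measureReal_def, gaussianReal_apply_eq_integral _ one_ne_zero,
    ENNReal.toReal_ofReal
      (setIntegral_nonneg measurableSet_Iic fun y _ => gaussianPDFReal_nonneg _ _ y),
    Phi_eq_integral_gaussianPDFReal]

lemma tendsto_Phi_atTop : Tendsto Phi atTop (𝓝 1) := by
  simpa only [← funext Phi_eq_cdf] using tendsto_cdf_atTop (gaussianReal 0 1)

lemma hasDerivAt_Phi (x : ℝ) : HasDerivAt Phi (gaussianPDFReal 0 1 x) x := by
  have hint : Integrable (gaussianPDFReal 0 1) := integrable_gaussianPDFReal 0 1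
  have hcont : Continuous (gaussianPDFReal 0 1) := by
    rw [gaussianPDFReal_def]; fun_prop
  have hPhi : Phi = fun x => Phi 0 + ∫ y in (0:ℝ)..x, gaussianPDFReal 0 1 y := by
    ext x
    rw [← intervalIntegral.integral_Iic_sub_Iic hint.integrableOn hint.integrableOn,
      Phi_eq_integral_gaussianPDFReal, Phi_eq_integral_gaussianPDFReal]
    ring
  rw [hPhi]
  exact (intervalIntegral.integral_hasDerivAt_right hint.intervalIntegrable
    (hcont.stronglyMeasurableAtFilter _ _) hcont.continuousAt).const_add _

theorem intervalIntegral.integral_eq_sub_of_hasDerivAt_of_tendsto_of_nonneg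
    {f f' : ℝ → ℝ} {a b L : ℝ} (hab : a < b)
    (hderiv : ∀ x ∈ Ioc a b, HasDerivAt f (f' x) x) (hf' : ∀ x ∈ Ioo a b, 0 ≤ f' x)
    (ha : Tendsto f (𝓝[>] a) (𝓝 L)) :
    ∫ x in a..b, f' x = f b - L := by
  classical
  set F := Function.update f a L
  have hFderiv : ∀ x ∈ Ioo a b, HasDerivAt F (f' x) x := fun x hx =>
    (hderiv x (Ioo_subset_Ioc_self hx)).congr_of_eventuallyEq <| by
      filter_upwards [Ioi_mem_nhds hx.1] with y hy using Function.update_of_ne hy.ne' _ _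
  have hFcont : ContinuousOn F (Icc a b) := by
    rw [continuousOn_update_iff, Icc_sdiff_left]
    exact ⟨fun x hx => (hderiv x hx).continuousAt.continuousWithinAt,
      fun _ => ha.mono_left (nhdsWithin_mono _ Ioc_subset_Ioi_self)⟩
  have hint : IntervalIntegrable f' volume a b :=
    intervalIntegrable_deriv_of_nonneg (by rwa [uIcc_of_le hab.le])
      (by simpa [hab.le] using hFderiv) (by simpa [hab.le] using hf')
  simpa [F, hab.ne'] using integral_eq_sub_of_hasDerivAt_of_le hab.le hFcont hFderiv hint

lemma G_eq_of_mul_eq {ν t ν' t' : ℝ} (h : ν * t = ν' * t') : G ν t = G ν' t' := by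
  ext x
  simp only [G, mul_assoc, h]

lemma G_sub_comm (ν t x y : ℝ) : G ν t (x - y) = G ν t (y - x) := by
  rw [G, G, ← neg_sub, neg_sq]

theorem integral_G_mul_G {ν s τ : ℝ} (hν : 0 < ν) (hs : 0 < s) (hτ : 0 < τ) (x y : ℝ) :
    ∫ z, G ν s (x - z) * G ν τ (z - y) = G ν (s + τ) (x - y) := by
  set b := (s + τ) / (2 * ν * s * τ)
  set m := (τ * x + s * y) / (s + τ)
  set C := (√(2 * π * ν * s))⁻¹ * (√(2 * π * ν * τ))⁻¹
  have hsquare : ∀ z, G ν s (x - z) * G ν τ (z - y)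
      = C * rexp (-(x - y) ^ 2 / (2 * ν * (s + τ))) * rexp (-b * (z - m) ^ 2) := by
    intro z
    simp only [G, C]
    rw [mul_assoc C, ← Real.exp_add, mul_mul_mul_comm, ← Real.exp_add]
    congr 2
    simp only [b, m]
    field_simp
    ring
  have hsqrt : C * √(π / b) = (√(2 * π * ν * (s + τ)))⁻¹ := by
    simp only [C, b]
    rw [← Real.sqrt_inv, ← Real.sqrt_inv, ← Real.sqrt_inv, ← Real.sqrt_mul (by positivity),
      ← Real.sqrt_mul (by positivity)]
    congr 1
    field_simp
  simp only [hsquare]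
  rw [integral_const_mul, integral_sub_right_eq_self (fun u => rexp (-b * u ^ 2)) m,
    integral_gaussian, G, ← hsqrt]
  ring

lemma G_nonneg (ν t x : ℝ) : 0 ≤ G ν t x := by
  unfold G; positivity

lemma hasDerivAt_G_time {c s : ℝ} (a : ℝ) (hc : 0 < c) (hs : 0 < s) :
    HasDerivAt (fun s => G c s a) (G c s a * (a ^ 2 / (2 * c * s ^ 2) - 1 / (2 * s))) s := by
  have hroot :
      HasDerivAt (fun s => √(2 * π * c * s)) (2 * π * c * 1 / (2 * √(2 * π * c * s))) s :=
    ((hasDerivAt_id' s).const_mul (2 * π * c)).sqrt (by positivity)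
  have hexp : HasDerivAt (fun s => -a ^ 2 / (2 * c * s)) (a ^ 2 / (2 * c * s ^ 2)) s :=
    ((hasDerivAt_const s (-a ^ 2)).fun_div ((hasDerivAt_id' s).const_mul (2 * c))
      (by positivity)).congr_deriv (by field_simp; ring)
  refine ((hroot.fun_inv (by positivity)).fun_mul hexp.exp).congr_deriv ?_
  have hsq : √(2 * π * c * s) ^ 2 = 2 * π * c * s := Real.sq_sqrt (by positivity)
  have hpos : 0 < √(2 * π * c * s) := by positivity
  simp only [G]
  field_simp
  rw [hsq]
  ring

noncomputable def antiderivG (c a s : ℝ) : ℝ :=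
  2 * s * G c s a + 2 * |a| / c * Phi (|a| / √(c * s))

lemma gaussianPDFReal_abs_div_sqrt_eq_sqrt_mul_G {c s : ℝ} (a : ℝ) (hc : 0 < c) (hs : 0 < s) :
    gaussianPDFReal 0 1 (|a| / √(c * s)) = √(c * s) * G c s a := by
  rw [gaussianPDFReal_zero_one, G, div_pow, sq_abs, Real.sq_sqrt (by positivity),
    show 2 * π * c * s = 2 * π * (c * s) by ring, Real.sqrt_mul (by positivity : 0 ≤ 2 * π),
    show -(a ^ 2 / (c * s)) / 2 = -a ^ 2 / (2 * c * s) by ring]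
  have : 0 < √(c * s) := by positivity
  field_simp

lemma hasDerivAt_antiderivG {c s : ℝ} (a : ℝ) (hc : 0 < c) (hs : 0 < s) :
    HasDerivAt (antiderivG c a) (G c s a) s := by
  have hroot : HasDerivAt (fun s => √(c * s)) (c * 1 / (2 * √(c * s))) s :=
    ((hasDerivAt_id' s).const_mul c).sqrt (by positivity)
  have harg := (hasDerivAt_const s |a|).fun_div hroot (by positivity)
  have hPhi := ((hasDerivAt_Phi _).comp s harg).const_mul (2 * |a| / c)
  refine ((((hasDerivAt_id' s).const_mul 2).fun_mul (hasDerivAt_G_time a hc hs)).add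
    hPhi).congr_deriv ?_
  rw [gaussianPDFReal_abs_div_sqrt_eq_sqrt_mul_G a hc hs]
  have hsq : √(c * s) ^ 2 = c * s := Real.sq_sqrt (by positivity)
  have hpos : 0 < √(c * s) := by positivity
  set r := √(c * s)
  field_simp
  linear_combination (G c s a * a ^ 2) * hsq - (G c s a * s * c) * sq_abs a

lemma tendsto_mul_G_nhdsGT_zero {c : ℝ} (a : ℝ) (hc : 0 < c) :
    Tendsto (fun s => 2 * s * G c s a) (𝓝[>] 0) (𝓝 0) := by
  have hbound : ∀ s > 0, 2 * s * G c s a ≤ 2 * √s / √(2 * π * c) := by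
    intro s hs
    have hexp : rexp (-a ^ 2 / (2 * c * s)) ≤ 1 :=
      Real.exp_le_one_iff.2 (div_nonpos_of_nonpos_of_nonneg (by nlinarith) (by positivity))
    have hsplit : 2 * s * G c s a = 2 * √s / √(2 * π * c) * rexp (-a ^ 2 / (2 * c * s)) := by
      have : 0 < √s := by positivity
      rw [G, Real.sqrt_mul (by positivity : 0 ≤ 2 * π * c) s]
      field_simp
      rw [Real.sq_sqrt hs.le]
    rw [hsplit]
    exact mul_le_of_le_one_right (by positivity) hexp
  have hlim : Tendsto (fun s => 2 * √s / √(2 * π * c)) (𝓝 0) (𝓝 0) := by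
    simpa using ((Real.continuous_sqrt.const_mul 2).div_const (√(2 * π * c))).tendsto 0
  refine squeeze_zero' ?_ ?_ (hlim.mono_left nhdsWithin_le_nhds)
  · filter_upwards [self_mem_nhdsWithin] with s hs
    exact mul_nonneg (by linarith [hs.out]) (G_nonneg _ _ _)
  · filter_upwards [self_mem_nhdsWithin] with s hs using hbound s hs

lemma tendsto_abs_div_sqrt_atTop {c a : ℝ} (hc : 0 < c) (ha : a ≠ 0) :
    Tendsto (fun s => |a| / √(c * s)) (𝓝[>] 0) atTop := by
  have hroot : Tendsto (fun s => √(c * s)) (𝓝[>] 0) (𝓝[>] 0) := by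
    refine tendsto_nhdsWithin_of_tendsto_nhds_of_eventually_within _ ?_ ?_
    · simpa using ((continuous_const.mul continuous_id).sqrt.tendsto 0 :
        Tendsto (fun s : ℝ => √(c * s)) _ _).mono_left nhdsWithin_le_nhds
    · filter_upwards [self_mem_nhdsWithin] with s hs
      exact Real.sqrt_pos.2 (mul_pos hc hs)
  simp only [div_eq_mul_inv]
  exact hroot.inv_tendsto_nhdsGT_zero.const_mul_atTop (abs_pos.2 ha)

lemma tendsto_antiderivG_nhdsGT_zero {c : ℝ} (a : ℝ) (hc : 0 < c) :
    Tendsto (antiderivG c a) (𝓝[>] 0) (𝓝 (2 * |a| / c)) := by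
  have hPhi :
      Tendsto (fun s => 2 * |a| / c * Phi (|a| / √(c * s))) (𝓝[>] 0) (𝓝 (2 * |a| / c)) := by
    rcases eq_or_ne a 0 with rfl | ha
    · simp
    · simpa using (tendsto_Phi_atTop.comp (tendsto_abs_div_sqrt_atTop hc ha)).const_mul
        (2 * |a| / c)
  have hsum := (tendsto_mul_G_nhdsGT_zero a hc).add hPhi
  rwa [zero_add] at hsum

theorem integral_G_time {c t : ℝ} (a : ℝ) (hc : 0 < c) (ht : 0 < t) :
    ∫ s in 0..t, G c s a = 2 * |a| / c * (Phi (|a| / √(c * t)) - 1) + 2 * t * G c t a := by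
  rw [intervalIntegral.integral_eq_sub_of_hasDerivAt_of_tendsto_of_nonneg ht
    (fun s hs => hasDerivAt_antiderivG a hc hs.1) (fun s _ => G_nonneg c s a)
    (tendsto_antiderivG_nhdsGT_zero a hc), antiderivG]
  ring

theorem two_point_convolution (ν t x y : ℝ) (hν : 0 < ν) (ht : 0 < t) :
    ∫ s in (0:ℝ)..t, ∫ z : ℝ, G ν (t - s) (x - z) * G ν (t - s) (y - z)
      = |x - y|/ν * (Phi (|x - y| / Real.sqrt (2*ν*t)) - 1) + 2*t * G (2*ν) t (x - y) := by
  have hconv :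
      ∀ τ ∈ Ioc 0 t, ∫ z, G ν τ (x - z) * G ν τ (y - z) = G (2 * ν) τ (x - y) := by
    intro τ hτ
    simp_rw [G_sub_comm ν τ y]
    rw [integral_G_mul_G hν hτ.1 hτ.1, G_eq_of_mul_eq (by ring : ν * (τ + τ) = 2 * ν * τ)]
  calc ∫ s in (0:ℝ)..t, ∫ z, G ν (t - s) (x - z) * G ν (t - s) (y - z)
      = ∫ τ in (0:ℝ)..t, ∫ z, G ν τ (x - z) * G ν τ (y - z) := by
        simpa using intervalIntegral.integral_comp_sub_left (a := 0) (b := t)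
          (fun τ => ∫ z, G ν τ (x - z) * G ν τ (y - z)) t
    _ = ∫ τ in (0:ℝ)..t, G (2 * ν) τ (x - y) := by
        rw [intervalIntegral.integral_of_le ht.le, intervalIntegral.integral_of_le ht.le]
        exact setIntegral_congr_fun measurableSet_Ioc hconv
    _ = _ := by
        rw [integral_G_time _ (by positivity) ht, mul_div_mul_left _ _ two_ne_zero]
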